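/- arXiv:2409.03740 — 3 statements merged into one kernel-verified Lean document; each statement's English description precedes it below -/
import Mathlib

section
/- For every μ > 0, lim_{β→∞} β · ∫₀^∞ μ e^{−μ s} · e^{−β s} / (1 + e^{−β s})² ds = μ/2. That is, for S ~ Exp(μ), the expectation E[ e^{−βS}/(1+e^{−βS})² ] is asymptotic to μ/(2β) as β → ∞. -/
/-!
After the substitution `t = β s` the quantity becomes `∫₀^∞ μ e^{-μ t/β} g(t) dt`, where
`g(t) = e^{-t}/(1+e^{-t})²` is the derivative of the logistic sigmoid `σ`. As `g(t) ≤ e^{-t}`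
and `|μ| t/β ≤ t/2` once `β ≥ 2|μ|`, the integrand is dominated by `|μ| e^{-t/2}`, so the
limit `β → ∞` may be taken under the integral, leaving `μ ∫₀^∞ g = μ (σ(∞) - σ(0)) = μ/2`.
-/

open MeasureTheory Real Filter Set Topology

noncomputable def logisticDensity (t : ℝ) : ℝ := exp (-t) / (1 + exp (-t)) ^ 2

lemma logisticDensity_nonneg (t : ℝ) : 0 ≤ logisticDensity t := by
  unfold logisticDensity
  positivity

lemma logisticDensity_le_exp_neg (t : ℝ) : logisticDensity t ≤ exp (-t) := by
  have h : (1 : ℝ) ≤ (1 + exp (-t)) ^ 2 := one_le_pow₀ (by linarith [exp_pos (-t)])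
  exact div_le_self (exp_nonneg _) h

lemma continuous_logisticDensity : Continuous logisticDensity := by
  unfold logisticDensity
  exact Continuous.div (by fun_prop) (by fun_prop) fun t => by positivity

lemma hasDerivAt_sigmoid_eq_logisticDensity (t : ℝ) :
    HasDerivAt sigmoid (logisticDensity t) t := by
  convert hasDerivAt_sigmoid t using 1
  rw [logisticDensity, sigmoid_def]
  field_simp
  ring

lemma integrableOn_logisticDensity_Ioi (a : ℝ) : IntegrableOn logisticDensity (Ioi a) := by
  refine (integrableOn_exp_neg_Ioi a).mono' continuous_logisticDensity.aestronglyMeasurable ?_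
  filter_upwards with t
  rw [norm_of_nonneg (logisticDensity_nonneg t)]
  exact logisticDensity_le_exp_neg t

lemma integral_logisticDensity_Ioi (a : ℝ) :
    ∫ t in Ioi a, logisticDensity t = 1 - sigmoid a :=
  integral_Ioi_of_hasDerivAt_of_tendsto' (fun t _ => hasDerivAt_sigmoid_eq_logisticDensity t)
    (integrableOn_logisticDensity_Ioi a) tendsto_sigmoid_atTop

lemma mul_integral_mul_comp_mul_Ioi (f g : ℝ → ℝ) {β : ℝ} (hβ : 0 < β) :
    β * ∫ s in Ioi 0, f s * g (β * s) = ∫ t in Ioi 0, f (t / β) * g t := by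
  have h := integral_comp_mul_left_Ioi' (fun t => f (t / β) * g t) 0 hβ
  simp only [mul_zero, smul_eq_mul, mul_div_cancel_left₀ _ hβ.ne'] at h
  exact h

lemma tendsto_integral_comp_div_mul_logisticDensity {f : ℝ → ℝ} (hf : Continuous f) {C a : ℝ}
    (hfC : ∀ s, 0 ≤ s → |f s| ≤ C * exp (a * s)) :
    Tendsto (fun β => ∫ t in Ioi 0, f (t / β) * logisticDensity t) atTop (𝓝 (f 0 / 2)) := by
  have hlim : ∫ t in Ioi 0, f 0 * logisticDensity t = f 0 / 2 := by
    rw [integral_const_mul, integral_logisticDensity_Ioi, sigmoid_zero]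
    ring
  rw [← hlim]
  refine tendsto_integral_filter_of_dominated_convergence (fun t => C * exp (-(1 / 2) * t))
    (Eventually.of_forall fun β => ?_) ?_ ((exp_neg_integrableOn_Ioi 0 one_half_pos).const_mul C)
    (Eventually.of_forall fun t => ?_)
  · exact ((hf.comp (continuous_id.div_const β)).mul
      continuous_logisticDensity).aestronglyMeasurable
  · filter_upwards [eventually_gt_atTop 0, eventually_ge_atTop (2 * a)] with β hβ hβa
    filter_upwards [ae_restrict_mem measurableSet_Ioi] with t (ht : 0 < t)
    have hexponent : a * (t / β) ≤ t / 2 := by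
      rw [mul_div_assoc', div_le_div_iff₀ hβ two_pos]
      nlinarith
    calc ‖f (t / β) * logisticDensity t‖
        = |f (t / β)| * logisticDensity t := by
          rw [norm_mul, Real.norm_eq_abs, norm_of_nonneg (logisticDensity_nonneg t)]
      _ ≤ C * exp (a * (t / β)) * exp (-t) :=
          mul_le_mul (hfC _ (by positivity)) (logisticDensity_le_exp_neg t)
            (logisticDensity_nonneg t) (le_trans (abs_nonneg _) (hfC _ (by positivity)))
      _ ≤ C * exp (t / 2) * exp (-t) := by
          have hC : 0 ≤ C := by simpa using (abs_nonneg _).trans (hfC 0 le_rfl)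
          gcongr
      _ = C * exp (-(1 / 2) * t) := by
          rw [mul_assoc, ← exp_add]
          ring_nf
  · have htβ : Tendsto (fun β => t / β) atTop (𝓝 0) := tendsto_const_nhds.div_atTop tendsto_id
    exact ((hf.tendsto 0).comp htβ).mul_const _

theorem softmin_factor_first_moment_general (mu : ℝ) :
    Tendsto
      (fun β : ℝ =>
        β * ∫ s in Ioi (0 : ℝ),
          mu * Real.exp (-(mu * s)) *
            (Real.exp (-(β * s)) / (1 + Real.exp (-(β * s))) ^ 2))
      atTop (nhds (mu / 2)) := by
  have hgrowth : ∀ s, 0 ≤ s → |mu * exp (-(mu * s))| ≤ |mu| * exp (|mu| * s) := by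
    intro s hs
    rw [abs_mul, abs_exp]
    gcongr
    nlinarith [neg_abs_le mu]
  have hlim := tendsto_integral_comp_div_mul_logisticDensity (by fun_prop) hgrowth
  simp only [mul_zero, neg_zero, exp_zero, mul_one] at hlim
  refine hlim.congr' ?_
  filter_upwards [eventually_gt_atTop 0] with β hβ
  exact (mul_integral_mul_comp_mul_Ioi (fun s => mu * exp (-(mu * s))) logisticDensity hβ).symm

/-- for `S ~ Exp(μ)`, `E[e^{−βS}/(1+e^{−βS})²] ~ μ/(2β)` as `β → ∞`. -/
theorem softmin_factor_first_moment (mu : ℝ) (hmu : 0 < mu) :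
    Tendsto
      (fun β : ℝ =>
        β * ∫ s in Ioi (0 : ℝ),
          mu * Real.exp (-(mu * s)) *
            (Real.exp (-(β * s)) / (1 + Real.exp (-(β * s))) ^ 2))
      atTop (nhds (mu / 2)) :=
  softmin_factor_first_moment_general mu
end

section
/- For every μ > 0, lim_{β→∞} β² · ∫₀^∞ μ e^{−μ s} · s · e^{−β s} / (1 + e^{−β s})² ds = μ · log 2. That is, for S ~ Exp(μ), the expectation E[ S · e^{−βS}/(1+e^{−βS})² ] is asymptotic to (μ log 2)/β² as β → ∞. -/
open MeasureTheory Real Filter Set Topology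

/-!
Substituting `u = β s` turns `β² E[S k(β S)]` into `∫₀^∞ μ e^{-μ u / β} u k(u) du`, where
`k(u) = e^{-u} / (1 + e^{-u})² = σ(u) (1 - σ(u))` is the derivative of the logistic sigmoid `σ`.
As `β → ∞` dominated convergence gives `μ ∫₀^∞ u σ'(u) du`, and `u (σ(u) - 1) + log σ(u)` is an
antiderivative of `u σ'(u)` rising from `-log 2` at `0` to `0` at `∞`.
-/

lemma exp_neg_div_one_add_exp_neg_sq (u : ℝ) :
    exp (-u) / (1 + exp (-u)) ^ 2 = sigmoid u * (1 - sigmoid u) := by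
  rw [← sigmoid_neg, ← sigmoid_mul_rexp_neg, sigmoid_def]
  field_simp

lemma hasDerivAt_mul_sigmoid_sub_one_add_log_sigmoid (u : ℝ) :
    HasDerivAt (fun u => u * (sigmoid u - 1) + log (sigmoid u))
      (u * (sigmoid u * (1 - sigmoid u))) u := by
  have hσ := hasDerivAt_sigmoid u
  refine (((hasDerivAt_id' u).mul (hσ.sub_const 1)).add
    (hσ.log (sigmoid_pos u).ne')).congr_deriv ?_
  field_simp [(sigmoid_pos u).ne']
  ring

lemma tendsto_mul_sigmoid_sub_one_add_log_sigmoid_atTop :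
    Tendsto (fun u => u * (sigmoid u - 1) + log (sigmoid u)) atTop (𝓝 0) := by
  -- `u (1 - σ u) = u e^{-u} σ u`
  have hlin : Tendsto (fun u => -(u * exp (-u) * sigmoid u)) atTop (𝓝 0) := by
    simpa using ((tendsto_pow_mul_exp_neg_atTop_nhds_zero 1).mul tendsto_sigmoid_atTop).neg
  have hlog : Tendsto (fun u => log (sigmoid u)) atTop (𝓝 0) := by
    simpa only [log_one, Function.comp_def] using
      (continuousAt_log one_ne_zero).tendsto.comp tendsto_sigmoid_atTop
  convert hlin.add hlog using 2 with u
  · rw [mul_assoc, mul_comm (exp (-u)), sigmoid_mul_rexp_neg, sigmoid_neg]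
    ring
  · simp

lemma mul_sigmoid_mul_one_sub_sigmoid_nonneg {u : ℝ} (hu : 0 ≤ u) :
    0 ≤ u * (sigmoid u * (1 - sigmoid u)) :=
  mul_nonneg hu (mul_nonneg (sigmoid_nonneg u) (sub_nonneg.mpr (sigmoid_le_one u)))

lemma integrableOn_mul_sigmoid_mul_one_sub_sigmoid :
    IntegrableOn (fun u => u * (sigmoid u * (1 - sigmoid u))) (Ioi 0) :=
  integrableOn_Ioi_deriv_of_nonneg' (fun u _ => hasDerivAt_mul_sigmoid_sub_one_add_log_sigmoid u)
    (fun _ hu => mul_sigmoid_mul_one_sub_sigmoid_nonneg (le_of_lt hu))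
    tendsto_mul_sigmoid_sub_one_add_log_sigmoid_atTop

lemma integral_mul_sigmoid_mul_one_sub_sigmoid :
    ∫ u in Ioi 0, u * (sigmoid u * (1 - sigmoid u)) = log 2 := by
  rw [integral_Ioi_of_hasDerivAt_of_nonneg'
    (fun u _ => hasDerivAt_mul_sigmoid_sub_one_add_log_sigmoid u)
    (fun _ hu => mul_sigmoid_mul_one_sub_sigmoid_nonneg (le_of_lt hu))
    tendsto_mul_sigmoid_sub_one_add_log_sigmoid_atTop]
  simp [sigmoid_zero]

lemma sq_mul_setIntegral_Ioi_mul_comp_mul (f k : ℝ → ℝ) {β : ℝ} (hβ : 0 < β) :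
    β ^ 2 * ∫ s in Ioi 0, f s * (s * k (β * s)) = ∫ u in Ioi 0, f (u / β) * (u * k u) := by
  have h := integral_comp_mul_left_Ioi (fun u => f (u / β) * (u * k u)) 0 hβ
  simp only [mul_zero, smul_eq_mul, mul_div_cancel_left₀ _ hβ.ne'] at h
  rw [← mul_right_inj' (inv_ne_zero hβ.ne'), ← h, ← integral_const_mul, ← integral_const_mul]
  congr 1 with s
  field_simp

theorem tendsto_setIntegral_Ioi_comp_div_mul {f g : ℝ → ℝ} {C : ℝ} (hf : Continuous f)
    (hf_bdd : ∀ s, 0 ≤ s → ‖f s‖ ≤ C) (hg : IntegrableOn g (Ioi 0)) :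
    Tendsto (fun β => ∫ u in Ioi 0, f (u / β) * g u) atTop
      (𝓝 (f 0 * ∫ u in Ioi 0, g u)) := by
  rw [← integral_const_mul]
  refine tendsto_integral_filter_of_dominated_convergence (fun u => C * ‖g u‖)
    (Eventually.of_forall fun β => ?_) ?_ (hg.norm.const_mul C) ?_
  · exact (hf.comp (continuous_id.div_const β)).aestronglyMeasurable.mul hg.aestronglyMeasurable
  · filter_upwards [eventually_gt_atTop 0] with β hβ
    filter_upwards [ae_restrict_mem measurableSet_Ioi] with u hu
    rw [norm_mul]
    exact mul_le_mul_of_nonneg_right (hf_bdd _ (div_nonneg (le_of_lt hu) hβ.le)) (norm_nonneg _)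
  · refine Eventually.of_forall fun u => (Tendsto.mul_const _ ?_)
    exact hf.continuousAt.tendsto.comp (tendsto_const_nhds.div_atTop tendsto_id)

/-- for `S ~ Exp(μ)`, `E[S·e^{−βS}/(1+e^{−βS})²] ~ (μ log 2)/β²`
as `β → ∞`. -/
theorem softmin_factor_weighted_moment (mu : ℝ) (hmu : 0 < mu) :
    Tendsto
      (fun β : ℝ =>
        β ^ 2 * ∫ s in Ioi (0 : ℝ),
          mu * Real.exp (-(mu * s)) *
            (s * Real.exp (-(β * s)) / (1 + Real.exp (-(β * s))) ^ 2))
      atTop (nhds (mu * Real.log 2)) := by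
  have hbdd (s : ℝ) (hs : 0 ≤ s) : ‖mu * exp (-(mu * s))‖ ≤ mu := by
    rw [norm_mul, Real.norm_of_nonneg hmu.le, Real.norm_of_nonneg (exp_pos _).le]
    exact mul_le_of_le_one_right hmu.le (exp_le_one_iff.mpr (neg_nonpos.mpr (mul_nonneg hmu.le hs)))
  have hlim := tendsto_setIntegral_Ioi_comp_div_mul (by fun_prop) hbdd
    integrableOn_mul_sigmoid_mul_one_sub_sigmoid
  rw [integral_mul_sigmoid_mul_one_sub_sigmoid] at hlim
  simp only [mul_zero, neg_zero, exp_zero, mul_one] at hlim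
  refine hlim.congr' ?_
  filter_upwards [eventually_gt_atTop 0] with β hβ
  simp_rw [mul_div_assoc, exp_neg_div_one_add_exp_neg_sq]
  exact (sq_mul_setIntegral_Ioi_mul_comp_mul (fun s => mu * exp (-(mu * s)))
    (fun u => sigmoid u * (1 - sigmoid u)) hβ).symm
end

section
/- For every μ > 0, lim_{β→∞} β · ∫₀^∞ μ e^{−μ s} · e^{−2β s} / (1 + e^{−β s})⁴ ds = μ/12. That is, for S ~ Exp(μ), the expectation E[ e^{−2βS}/(1+e^{−βS})⁴ ] is asymptotic to μ/(12β) as β → ∞. -/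
/-!
Write `σ` for the logistic function. The substitution `u = β s` turns the left-hand side into
`∫₀^∞ μ e^{-μ u / β} k(u) du` with `k(u) = e^{-2u} / (1 + e^{-u})⁴`, which tends to `μ ∫₀^∞ k` by
dominated convergence. Now `k = (σ')² = σ' · σ (1 - σ)`, so the substitution `p = σ(u)` gives
`∫₀^∞ k = ∫_{1/2}^1 p (1 - p) dp = 1/12`.
-/

open MeasureTheory Real Filter Set Topology

lemma exp_neg_two_mul_div_one_add_exp_neg_pow_four (u : ℝ) :
    exp (-(2 * u)) / (1 + exp (-u)) ^ 4 = (sigmoid u * (1 - sigmoid u)) ^ 2 := by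
  rw [← sigmoid_neg, ← sigmoid_mul_rexp_neg, sigmoid_def, mul_pow, mul_pow, ← exp_nat_mul]
  field_simp
  push_cast
  ring_nf

noncomputable def sigmoidDerivSqPrimitive (x : ℝ) : ℝ := sigmoid x ^ 2 / 2 - sigmoid x ^ 3 / 3

lemma hasDerivAt_sigmoidDerivSqPrimitive (u : ℝ) :
    HasDerivAt sigmoidDerivSqPrimitive ((sigmoid u * (1 - sigmoid u)) ^ 2) u := by
  refine ((((hasDerivAt_sigmoid u).fun_pow 2).div_const 2).fun_sub
    (((hasDerivAt_sigmoid u).fun_pow 3).div_const 3)).congr_deriv ?_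
  push_cast
  ring

lemma tendsto_sigmoidDerivSqPrimitive_atTop :
    Tendsto sigmoidDerivSqPrimitive atTop (𝓝 (1 / 6)) := by
  convert ((tendsto_sigmoid_atTop.pow 2).div_const 2).sub
    ((tendsto_sigmoid_atTop.pow 3).div_const 3) using 2
  · rfl
  · norm_num

lemma integrableOn_Ioi_sigmoid_mul_one_sub_sigmoid_sq :
    IntegrableOn (fun u ↦ (sigmoid u * (1 - sigmoid u)) ^ 2) (Ioi 0) :=
  integrableOn_Ioi_deriv_of_nonneg' (fun u _ ↦ hasDerivAt_sigmoidDerivSqPrimitive u)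
    (fun _ _ ↦ sq_nonneg _) tendsto_sigmoidDerivSqPrimitive_atTop

lemma integral_Ioi_sigmoid_mul_one_sub_sigmoid_sq :
    ∫ u in Ioi (0 : ℝ), (sigmoid u * (1 - sigmoid u)) ^ 2 = 1 / 12 := by
  rw [integral_Ioi_of_hasDerivAt_of_nonneg' (fun u _ ↦ hasDerivAt_sigmoidDerivSqPrimitive u)
    (fun _ _ ↦ sq_nonneg _) tendsto_sigmoidDerivSqPrimitive_atTop, sigmoidDerivSqPrimitive]
  norm_num

theorem tendsto_smul_integral_Ioi_comp_mul {E : Type*} [NormedAddCommGroup E] [NormedSpace ℝ E]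
    {φ : ℝ → ℝ} {f : ℝ → E} {C : ℝ} (hφm : Measurable φ) (hφ : ContinuousWithinAt φ (Ioi 0) 0)
    (hφC : ∀ s, 0 < s → |φ s| ≤ C) (hf : IntegrableOn f (Ioi 0)) :
    Tendsto (fun β ↦ β • ∫ s in Ioi (0 : ℝ), φ s • f (β * s)) atTop
      (𝓝 (φ 0 • ∫ u in Ioi (0 : ℝ), f u)) := by
  have hsubst : ∀ᶠ β in atTop, ∫ u in Ioi (0 : ℝ), φ (u / β) • f u
      = β • ∫ s in Ioi (0 : ℝ), φ s • f (β * s) := by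
    filter_upwards [eventually_gt_atTop 0] with β hβ
    simpa [mul_div_cancel_left₀ _ hβ.ne'] using
      (integral_comp_mul_left_Ioi' (fun u ↦ φ (u / β) • f u) 0 hβ).symm
  refine Tendsto.congr' hsubst ?_
  rw [← integral_smul]
  refine tendsto_integral_filter_of_dominated_convergence (fun u ↦ C * ‖f u‖) ?_ ?_
    (hf.norm.const_mul C) ?_
  · exact .of_forall fun β ↦
      (hφm.comp (measurable_id.div_const β)).aestronglyMeasurable.smul hf.aestronglyMeasurable
  · filter_upwards [eventually_gt_atTop 0] with β hβ
    refine (ae_restrict_iff' measurableSet_Ioi).mpr (.of_forall fun u (hu : 0 < u) ↦ ?_)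
    rw [norm_smul, Real.norm_eq_abs]
    exact mul_le_mul_of_nonneg_right (hφC _ (div_pos hu hβ)) (norm_nonneg _)
  · refine (ae_restrict_iff' measurableSet_Ioi).mpr (.of_forall fun u (hu : 0 < u) ↦ ?_)
    have hdiv : Tendsto (fun β ↦ u / β) atTop (𝓝[>] 0) :=
      tendsto_nhdsWithin_of_tendsto_nhds_of_eventually_within _
        (tendsto_const_nhds.div_atTop tendsto_id)
        (by filter_upwards [eventually_gt_atTop 0] with β hβ using div_pos hu hβ)
    exact (hφ.tendsto.comp hdiv).smul_const (f u)

/-- for `S ~ Exp(μ)`, `E[e^{−2βS}/(1+e^{−βS})⁴] ~ μ/(12β)`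
as `β → ∞`. -/
theorem softmin_factor_squared_moment (mu : ℝ) (hmu : 0 < mu) :
    Tendsto
      (fun β : ℝ =>
        β * ∫ s in Ioi (0 : ℝ),
          mu * Real.exp (-(mu * s)) *
            (Real.exp (-(2 * β * s)) / (1 + Real.exp (-(β * s))) ^ 4))
      atTop (nhds (mu / 12)) := by
  have hbound : ∀ s, 0 < s → |mu * exp (-(mu * s))| ≤ mu := fun s hs ↦ by
    rw [abs_of_pos (by positivity)]
    exact mul_le_of_le_one_right hmu.le (exp_le_one_iff.mpr (by nlinarith))
  have h := tendsto_smul_integral_Ioi_comp_mul (by fun_prop) (by fun_prop) hbound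
    integrableOn_Ioi_sigmoid_mul_one_sub_sigmoid_sq
  simp_rw [integral_Ioi_sigmoid_mul_one_sub_sigmoid_sq,
    ← exp_neg_two_mul_div_one_add_exp_neg_pow_four] at h
  convert h using 3 with β
  · simp only [smul_eq_mul, mul_assoc]
  · rw [mul_zero, neg_zero, exp_zero, mul_one, smul_eq_mul]
    ring
end
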